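/- arXiv:1702.06620 — 2 statements merged into one kernel-verified Lean document; each statement's English description precedes it below -/
import Mathlib

section
/- A first-order theory T has the ground interpolation property if and only if its universal fragment T_∀ has the ground interpolation property. Moreover, any ground interpolant with respect to T is an interpolant with respect to T_∀ and vice versa. -/
open FirstOrder FirstOrder.Language

universe u v w

namespace PaperFOL

variable {L : FirstOrder.Language.{u, v}}

/-- A sentence is universal: the universal closure of a quantifier-free formula. -/
def IsUniversalSentence (φ : L.Sentence) : Prop :=
  ∃ (n : ℕ) (ψ : L.BoundedFormula Empty n), ψ.IsQF ∧ φ = ψ.alls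

/-- The universal fragment `T_∀` of a theory `T`: all universal sentences entailed by `T`. -/
def univFragment (T : L.Theory) : L.Theory :=
  {φ | IsUniversalSentence φ ∧ T ⊨ᵇ φ}

/-- A sentence `φ` is satisfiable w.r.t. `T`: some model of `T` satisfies `φ`. -/
def SatWith (T : L.Theory) (φ : L.Sentence) : Prop :=
  Theory.IsSatisfiable (T ∪ {φ})

/-- `T` allows quantifier elimination. -/
def HasQE (T : L.Theory) : Prop :=
  ∀ {n : ℕ} (φ : L.BoundedFormula Empty n),
    ∃ ψ : L.BoundedFormula Empty n, ψ.IsQF ∧ T ⊨ᵇ φ.iff ψ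

/-- Literals: atomic or negated atomic formulas. -/
inductive IsLiteral {n : ℕ} : L.BoundedFormula Empty n → Prop
  | atom {φ : L.BoundedFormula Empty n} : φ.IsAtomic → IsLiteral φ
  | negAtom {φ : L.BoundedFormula Empty n} : φ.IsAtomic → IsLiteral φ.not

/-- Clauses: disjunctions of literals. -/
inductive IsClauseFormula {n : ℕ} : L.BoundedFormula Empty n → Prop
  | lit {φ : L.BoundedFormula Empty n} : IsLiteral φ → IsClauseFormula φ
  | sup {φ ψ : L.BoundedFormula Empty n} :
      IsClauseFormula φ → IsLiteral ψ → IsClauseFormula (φ ⊔ ψ)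

/-- Two theories over the same signature are co-theories iff they have the same
universal consequences. -/
def CoTheories (T₁ T₂ : L.Theory) : Prop :=
  ∀ φ : L.Sentence, IsUniversalSentence φ → (T₁ ⊨ᵇ φ ↔ T₂ ⊨ᵇ φ)

/-- The lift of an `L`-theory to the language with additional constants from `α`. -/
def liftT (α : Type w) (T : L.Theory) : (L[[α]]).Theory :=
  (L.lhomWithConstants α).onTheory T

/-- A theory is universal if all its axioms are universal sentences. -/
def IsUniversalTheory (T : L.Theory) : Prop :=
  ∀ φ ∈ T, IsUniversalSentence φ

section Interpolation

/-- `I` is a ground interpolant of `A` and `B` w.r.t. `T`, where `A` is a ground formula with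
constants among the shared `Fin nc` and own `Fin na`, `B` with shared `Fin nc` and own `Fin nb`,
and `I` only contains the shared constants `Fin nc`. -/
def IsGroundInterpolant (T : L.Theory) {nc na nb : ℕ}
    (A : (L[[Fin nc ⊕ Fin na]]).Sentence) (B : (L[[Fin nc ⊕ Fin nb]]).Sentence)
    (I : (L[[Fin nc]]).Sentence) : Prop :=
  I.IsQF ∧
    (liftT (Fin nc ⊕ Fin na) T ∪ {A}) ⊨ᵇ
      ((L.lhomWithConstantsMap (Sum.inl : Fin nc → Fin nc ⊕ Fin na)).onSentence I) ∧
    ¬ Theory.IsSatisfiable (liftT (Fin nc ⊕ Fin nb) T ∪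
      {B, (L.lhomWithConstantsMap (Sum.inl : Fin nc → Fin nc ⊕ Fin nb)).onSentence I})

/-- `A ∧ B` is unsatisfiable w.r.t. `T` (in the joint language with all constants). -/
def JointlyUnsat (T : L.Theory) {nc na nb : ℕ}
    (A : (L[[Fin nc ⊕ Fin na]]).Sentence) (B : (L[[Fin nc ⊕ Fin nb]]).Sentence) : Prop :=
  ¬ Theory.IsSatisfiable (liftT (Fin nc ⊕ (Fin na ⊕ Fin nb)) T ∪
      {(L.lhomWithConstantsMap (Sum.map id Sum.inl)).onSentence A,
       (L.lhomWithConstantsMap (Sum.map id Sum.inr)).onSentence B})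

/-- `T` has the ground interpolation property. -/
def GroundInterpolation (T : L.Theory) : Prop :=
  ∀ (nc na nb : ℕ) (A : (L[[Fin nc ⊕ Fin na]]).Sentence) (B : (L[[Fin nc ⊕ Fin nb]]).Sentence),
    A.IsQF → B.IsQF → JointlyUnsat T A B →
    ∃ I : (L[[Fin nc]]).Sentence, IsGroundInterpolant T A B I

end Interpolation

section Amalgamation

/-- `T` has the amalgamation property. -/
def Amalgamation (T : L.Theory) : Prop :=
  ∀ (A M₁ M₂ : Type w) [L.Structure A] [L.Structure M₁] [L.Structure M₂],
    A ⊨ T → M₁ ⊨ T → M₂ ⊨ T →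
    ∀ (f₁ : A ↪[L] M₁) (f₂ : A ↪[L] M₂),
      ∃ (N : Theory.ModelType.{u, v, w} T) (g₁ : M₁ ↪[L] N) (g₂ : M₂ ↪[L] N),
        ∀ a, g₁ (f₁ a) = g₂ (f₂ a)

/-- `T` has the sub-amalgamation property (the common substructure need not be a model). -/
def SubAmalgamation (T : L.Theory) : Prop :=
  ∀ (A M₁ M₂ : Type w) [L.Structure A] [L.Structure M₁] [L.Structure M₂],
    M₁ ⊨ T → M₂ ⊨ T →
    ∀ (f₁ : A ↪[L] M₁) (f₂ : A ↪[L] M₂),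
      ∃ (N : Theory.ModelType.{u, v, w} T) (g₁ : M₁ ↪[L] N) (g₂ : M₂ ↪[L] N),
        ∀ a, g₁ (f₁ a) = g₂ (f₂ a)

/-- `T` has the strong sub-amalgamation property. -/
def StrongSubAmalgamation (T : L.Theory) : Prop :=
  ∀ (A M₁ M₂ : Type w) [L.Structure A] [L.Structure M₁] [L.Structure M₂],
    M₁ ⊨ T → M₂ ⊨ T →
    ∀ (f₁ : A ↪[L] M₁) (f₂ : A ↪[L] M₂),
      ∃ (N : Theory.ModelType.{u, v, w} T) (g₁ : M₁ ↪[L] N) (g₂ : M₂ ↪[L] N),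
        (∀ a, g₁ (f₁ a) = g₂ (f₂ a)) ∧
        (∀ m₁ m₂, g₁ m₁ = g₂ m₂ → ∃ a, m₁ = f₁ a ∧ m₂ = f₂ a)

end Amalgamation

section ModelCompanion

/-- `T` is model complete: every embedding between models of `T` is elementary. -/
def IsModelComplete (T : L.Theory) : Prop :=
  ∀ (M N : Type w) [L.Structure M] [L.Structure N], M ⊨ T → N ⊨ T →
    ∀ (f : M ↪[L] N) (k : ℕ) (φ : L.Formula (Fin k)) (x : Fin k → M),
      φ.Realize (f ∘ x) ↔ φ.Realize x

/-- `T*` is a model companion of `T`. -/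
def IsModelCompanion (T Ts : L.Theory) : Prop :=
  CoTheories T Ts ∧ IsModelComplete.{u, v, w} Ts

/-- The diagram of a structure: all literal sentences (with constants for all elements)
true in the structure. -/
def diagram (A : Type w) [L.Structure A] : (L[[A]]).Theory :=
  {φ : (L[[A]]).Sentence | IsLiteral φ ∧ A ⊨ φ}

/-- `T*` is a model completion of `T`. -/
def IsModelCompletion (T Ts : L.Theory) : Prop :=
  IsModelCompanion.{u, v, w} T Ts ∧
    ∀ (A : Type w) [L.Structure A], A ⊨ T →
      Theory.IsComplete (liftT A Ts ∪ diagram A)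

end ModelCompanion

end PaperFOL


/-! A quantifier-free sentence `φ` over finitely many new constants is satisfiable together with
`T` iff `T` does not entail the universal sentence `∀ x̄, ¬ φ(x̄)`. Since `T` and `T_∀` entail the
same universal sentences, they agree on the satisfiability of quantifier-free ground sentences.
Every clause in the definitions of ground interpolant and of joint unsatisfiability is such a
satisfiability condition, the entailment `A ⊨ I` being the unsatisfiability of `A ∧ ¬ I`. -/

namespace FirstOrder.Language.BoundedFormula.IsQF

variable {L L' : Language} {α β : Type*} {n : ℕ}

theorem mapTermRel {ft : ∀ n, L.Term (α ⊕ Fin n) → L'.Term (β ⊕ Fin n)}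
    {fr : ∀ n, L.Relations n → L'.Relations n} {φ : L.BoundedFormula α n} (h : φ.IsQF) :
    (φ.mapTermRel ft fr fun _ => id).IsQF := by
  induction h with
  | falsum => exact isQF_bot
  | of_isAtomic h =>
    cases h with
    | equal => exact (IsAtomic.equal _ _).isQF
    | rel => exact (IsAtomic.rel _ _).isQF
  | imp _ _ ih₁ ih₂ => exact ih₁.imp ih₂

theorem onBoundedFormula (g : L →ᴸ L') {φ : L.BoundedFormula α n} (h : φ.IsQF) :
    (g.onBoundedFormula φ).IsQF := by
  induction h with
  | falsum => exact isQF_bot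
  | of_isAtomic h =>
    cases h with
    | equal => exact (IsAtomic.equal _ _).isQF
    | rel => exact (IsAtomic.rel _ _).isQF
  | imp _ _ ih₁ ih₂ => exact ih₁.imp ih₂

theorem onSentence (g : L →ᴸ L') {φ : L.Sentence} (h : φ.IsQF) : (g.onSentence φ).IsQF :=
  h.onBoundedFormula g

theorem equivSentence_symm {φ : (L[[α]]).Sentence} (h : φ.IsQF) :
    (Formula.equivSentence.symm φ).IsQF :=
  h.mapTermRel.mapTermRel

end FirstOrder.Language.BoundedFormula.IsQF

namespace PaperFOL

variable {L : FirstOrder.Language.{u, v}}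

/-- `∀ x̄, ¬ φ(x̄)`, where the new constants of `φ` become universally quantified variables. -/
noncomputable def forallNot (α : Type*) [Finite α] (φ : (L[[α]]).Sentence) : L.Sentence :=
  ((Formula.equivSentence.symm φ).relabel (Sum.inr : α → Empty ⊕ α)).not.iAlls α

theorem isUniversalSentence_forallNot {α : Type*} [Finite α] {φ : (L[[α]]).Sentence}
    (hφ : φ.IsQF) : IsUniversalSentence (forallNot α φ) :=
  ⟨_, _, (hφ.equivSentence_symm.relabel _).not.relabel _, rfl⟩

theorem realize_forallNot {α : Type*} [Finite α] (φ : (L[[α]]).Sentence) (M : Type*)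
    [L.Structure M] :
    M ⊨ forallNot α φ ↔ ∀ v : α → M, ¬ (Formula.equivSentence.symm φ).Realize v := by
  simp [forallNot, Sentence.Realize, Formula.realize_relabel, Function.comp_def]

theorem isSatisfiable_liftT_union_singleton_iff (T : L.Theory) {α : Type} [Finite α]
    (φ : (L[[α]]).Sentence) :
    Theory.IsSatisfiable (liftT α T ∪ {φ}) ↔ ¬ T ⊨ᵇ forallNot α φ := by
  rw [Theory.models_sentence_iff, not_forall]
  constructor
  · rintro ⟨M⟩
    obtain ⟨hT, hφ⟩ := Theory.model_union_iff.mp M.is_model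
    let _ : L.Structure M := (L.lhomWithConstants α).reduct M
    have _ : (L.lhomWithConstants α).IsExpansionOn M := LHom.isExpansionOn_reduct _ M
    have _ : (M : Type _) ⊨ T := ((L.lhomWithConstants α).onTheory_model T).mp hT
    refine ⟨Theory.ModelType.of T M, fun h => (realize_forallNot φ M).mp h (L.con ·) ?_⟩
    exact (Formula.realize_equivSentence_symm_con M φ).mpr (Theory.model_singleton_iff.mp hφ)
  · rintro ⟨M, hM⟩
    obtain ⟨v, hv⟩ : ∃ v : α → M, (Formula.equivSentence.symm φ).Realize v := by
      simpa [realize_forallNot] using hM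
    let _ : (constantsOn α).Structure M := constantsOn.structure v
    have _ : (M : Type _) ⊨ liftT α T ∪ {φ} :=
      Theory.model_union_iff.mpr ⟨((L.lhomWithConstants α).onTheory_model T).mpr M.is_model,
        Theory.model_singleton_iff.mpr ((Formula.realize_equivSentence_symm M φ v).mp hv)⟩
    exact ⟨Theory.ModelType.of _ M⟩

theorem univFragment_models_iff {T : L.Theory} {σ : L.Sentence} (hσ : IsUniversalSentence σ) :
    univFragment T ⊨ᵇ σ ↔ T ⊨ᵇ σ := by
  refine ⟨fun h => Theory.models_sentence_iff.mpr fun M => ?_,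
    fun h => Theory.models_sentence_of_mem ⟨hσ, h⟩⟩
  have _ : (M : Type _) ⊨ univFragment T :=
    (Theory.model_iff _).mpr fun ψ hψ => Theory.models_sentence_iff.mp hψ.2 M
  exact Theory.models_sentence_iff.mp h (Theory.ModelType.of _ M)

theorem isSatisfiable_liftT_univFragment_iff (T : L.Theory) {α : Type} [Finite α]
    {φ : (L[[α]]).Sentence} (hφ : φ.IsQF) :
    Theory.IsSatisfiable (liftT α (univFragment T) ∪ {φ}) ↔
      Theory.IsSatisfiable (liftT α T ∪ {φ}) := by
  rw [isSatisfiable_liftT_union_singleton_iff, isSatisfiable_liftT_union_singleton_iff,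
    univFragment_models_iff (isUniversalSentence_forallNot hφ)]

theorem isSatisfiable_union_pair_iff {L' : FirstOrder.Language.{u, v}} (T : L'.Theory)
    (A B : L'.Sentence) :
    Theory.IsSatisfiable (T ∪ {A, B}) ↔ Theory.IsSatisfiable (T ∪ {A ⊓ B}) := by
  have h (M : Type (max u v)) [L'.Structure M] : M ⊨ T ∪ {A, B} ↔ M ⊨ T ∪ {A ⊓ B} := by
    simp [Theory.model_insert_iff, and_assoc]
  exact ⟨fun ⟨M⟩ => have := (h M).mp M.is_model; ⟨.of _ M⟩,
    fun ⟨M⟩ => have := (h M).mpr M.is_model; ⟨.of _ M⟩⟩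

theorem isSatisfiable_liftT_univFragment_pair_iff (T : L.Theory) {α : Type} [Finite α]
    {A B : (L[[α]]).Sentence} (hA : A.IsQF) (hB : B.IsQF) :
    Theory.IsSatisfiable (liftT α (univFragment T) ∪ {A, B}) ↔
      Theory.IsSatisfiable (liftT α T ∪ {A, B}) := by
  rw [isSatisfiable_union_pair_iff, isSatisfiable_union_pair_iff,
    isSatisfiable_liftT_univFragment_iff T (hA.inf hB)]

theorem models_liftT_univFragment_iff (T : L.Theory) {α : Type} [Finite α]
    {A J : (L[[α]]).Sentence} (hA : A.IsQF) (hJ : J.IsQF) :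
    (liftT α (univFragment T) ∪ {A}) ⊨ᵇ J ↔ (liftT α T ∪ {A}) ⊨ᵇ J := by
  rw [Theory.models_iff_not_satisfiable, Theory.models_iff_not_satisfiable, Set.union_assoc,
    Set.union_assoc, Set.singleton_union, isSatisfiable_liftT_univFragment_pair_iff T hA hJ.not]

theorem isGroundInterpolant_univFragment_iff (T : L.Theory) {nc na nb : ℕ}
    {A : (L[[Fin nc ⊕ Fin na]]).Sentence} {B : (L[[Fin nc ⊕ Fin nb]]).Sentence}
    {I : (L[[Fin nc]]).Sentence} (hA : A.IsQF) (hB : B.IsQF) :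
    IsGroundInterpolant (univFragment T) A B I ↔ IsGroundInterpolant T A B I :=
  and_congr_right fun hI => and_congr (models_liftT_univFragment_iff T hA (hI.onSentence _))
    (not_congr (isSatisfiable_liftT_univFragment_pair_iff T hB (hI.onSentence _)))

theorem jointlyUnsat_univFragment_iff (T : L.Theory) {nc na nb : ℕ}
    {A : (L[[Fin nc ⊕ Fin na]]).Sentence} {B : (L[[Fin nc ⊕ Fin nb]]).Sentence}
    (hA : A.IsQF) (hB : B.IsQF) :
    JointlyUnsat (univFragment T) A B ↔ JointlyUnsat T A B :=
  not_congr (isSatisfiable_liftT_univFragment_pair_iff T (hA.onSentence _) (hB.onSentence _))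

theorem groundInterpolation_univFragment_iff (T : L.Theory) :
    GroundInterpolation (univFragment T) ↔ GroundInterpolation T := by
  constructor <;> intro h nc na nb A B hA hB hAB
  · exact (h nc na nb A B hA hB ((jointlyUnsat_univFragment_iff T hA hB).mpr hAB)).imp
      fun _ => (isGroundInterpolant_univFragment_iff T hA hB).mp
  · exact (h nc na nb A B hA hB ((jointlyUnsat_univFragment_iff T hA hB).mp hAB)).imp
      fun _ => (isGroundInterpolant_univFragment_iff T hA hB).mpr

end PaperFOL

/-- `T` has ground interpolation iff `T_∀` has ground interpolation; moreover
ground interpolants w.r.t. `T` are exactly the ground interpolants w.r.t. `T_∀`. -/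
theorem statement_2 {L : FirstOrder.Language.{u, v}} (T : L.Theory) :
    (PaperFOL.GroundInterpolation T ↔ PaperFOL.GroundInterpolation (PaperFOL.univFragment T)) ∧
    (∀ (nc na nb : ℕ) (A : (L[[Fin nc ⊕ Fin na]]).Sentence)
        (B : (L[[Fin nc ⊕ Fin nb]]).Sentence) (I : (L[[Fin nc]]).Sentence),
        A.IsQF → B.IsQF →
        (PaperFOL.IsGroundInterpolant T A B I ↔
          PaperFOL.IsGroundInterpolant (PaperFOL.univFragment T) A B I)) :=
  ⟨(PaperFOL.groundInterpolation_univFragment_iff T).symm, fun _ _ _ _ _ _ hA hB =>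
    (PaperFOL.isGroundInterpolant_univFragment_iff T hA hB).symm⟩
end

section
/- Let T be a first-order theory such that its universal fragment T_∀ has the amalgamation property. Then both T_∀ and T have the ground interpolation property. -/
open FirstOrder FirstOrder.Language

universe u v w

universe u₂ v₂

namespace InterpHelpers

open PaperFOL FirstOrder.Language.Structure FirstOrder.Language.BoundedFormula



open PaperFOL FirstOrder.Language.BoundedFormula

variable {L : FirstOrder.Language.{u, v}}

section QF
variable {L' : FirstOrder.Language.{u₂, v₂}}

theorem isQF_mapTermRel {L' : Language} {α β : Type*} {g : ℕ → ℕ}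
    (ft : ∀ n, L.Term (α ⊕ (Fin n)) → L'.Term (β ⊕ (Fin (g n))))
    (fr : ∀ n, L.Relations n → L'.Relations n)
    (h' : ∀ n, L'.BoundedFormula β (g (n + 1)) → L'.BoundedFormula β (g n + 1))
    {n} {φ : L.BoundedFormula α n} (hφ : φ.IsQF) :
    (φ.mapTermRel ft fr h').IsQF := by
  induction hφ with
  | falsum => exact IsQF.falsum
  | of_isAtomic h =>
    cases h with
    | equal t₁ t₂ => exact (IsAtomic.equal _ _).isQF
    | rel R ts => exact (IsAtomic.rel _ _).isQF
  | imp _ _ ih₁ ih₂ => exact ih₁.imp ih₂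

theorem isQF_equivSentence {α : Type*} {φ : L.Formula α} (hφ : φ.IsQF) :
    (Formula.equivSentence φ).IsQF := by
  exact isQF_mapTermRel _ _ _ (isQF_mapTermRel _ _ _ hφ)

theorem isQF_equivSentence_symm {α : Type*} {φ : (L[[α]]).Sentence} (hφ : φ.IsQF) :
    (Formula.equivSentence.symm φ).IsQF := by
  exact isQF_mapTermRel _ _ _ (isQF_mapTermRel _ _ _ hφ)

theorem isQF_onBoundedFormula {φ : L →ᴸ L'} {α : Type*} {n : ℕ}
    {ψ : L.BoundedFormula α n} (hψ : ψ.IsQF) : (φ.onBoundedFormula ψ).IsQF := by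
  induction hψ with
  | falsum => exact IsQF.falsum
  | of_isAtomic h =>
    cases h with
    | equal t₁ t₂ => exact (IsAtomic.equal _ _).isQF
    | rel R ts => exact (IsAtomic.rel _ _).isQF
  | imp _ _ ih₁ ih₂ => exact ih₁.imp ih₂

theorem isQF_onSentence {L' : FirstOrder.Language.{u₂, v₂}} {φ : L →ᴸ L'}
    {ψ : L.Sentence} (hψ : ψ.IsQF) : (φ.onSentence ψ).IsQF :=
  isQF_onBoundedFormula hψ

theorem isUniversal_alls {n : ℕ} {φ : L.BoundedFormula Empty n} (h : φ.IsUniversal) :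
    (BoundedFormula.alls φ).IsUniversal := by
  induction n with
  | zero => exact h
  | succ n ih => exact ih h.all


end QF

section UnivClosure

variable {α : Type} [Finite α] {T : L.Theory}

/-- The universal closure of the negation of a ground sentence, as an `L`-sentence. -/
noncomputable def univClosureNot (χ : (L[[α]]).Sentence) : L.Sentence :=
  (((Formula.equivSentence.symm χ).not).relabel (Sum.inr : α → Empty ⊕ α)).iAlls α

theorem isUniversalSentence_univClosureNot {χ : (L[[α]]).Sentence} (hχ : χ.IsQF) :
    IsUniversalSentence (univClosureNot χ) := by
  rw [univClosureNot, Formula.iAlls]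
  exact ⟨_, _, ((((isQF_equivSentence_symm hχ).not).relabel _).relabel _), rfl⟩

theorem realize_univClosureNot {χ : (L[[α]]).Sentence} (M : Type*) [L.Structure M] :
    M ⊨ univClosureNot χ ↔ ∀ v : α → M, ¬ (Formula.equivSentence.symm χ).Realize v := by
  rw [univClosureNot, Sentence.Realize]
  rw [Formula.realize_iAlls]
  constructor
  · intro h v
    have := h v
    rwa [Formula.realize_relabel, Formula.realize_not] at this
  · intro h v
    rw [Formula.realize_relabel, Formula.realize_not]
    exact h v

/-- Key transfer: satisfiability of `T` plus a ground sentence is equivalent to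
non-entailment of the universal closure of its negation. -/
theorem satisfiable_iff_not_models_univClosureNot (T : L.Theory) (χ : (L[[α]]).Sentence) :
    Theory.IsSatisfiable (liftT α T ∪ {χ}) ↔ ¬ (T ⊨ᵇ univClosureNot χ) := by
  constructor
  · rintro ⟨M⟩ h
    letI : L.Structure M := (L.lhomWithConstants α).reduct M
    haveI : (L.lhomWithConstants α).IsExpansionOn M := ⟨fun _ _ => rfl, fun _ _ => rfl⟩
    have hM : M ⊨ liftT α T ∪ {χ} := M.is_model
    rw [Theory.model_union_iff] at hM
    have hMT : M ⊨ T := ((L.lhomWithConstants α).onTheory_model T).1 hM.1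
    have hψ := h.realize_sentence M
    rw [realize_univClosureNot] at hψ
    refine hψ (fun a => (L.con a : M)) ?_
    rw [Formula.realize_equivSentence_symm_con]
    exact Theory.model_singleton_iff.1 hM.2
  · intro h
    rw [Theory.models_sentence_iff] at h
    push_neg at h
    obtain ⟨M, hM⟩ := h
    rw [realize_univClosureNot] at hM
    push_neg at hM
    obtain ⟨v, hv⟩ := hM
    letI : (constantsOn α).Structure M := constantsOn.structure v
    have hχM : M ⊨ χ := (Formula.realize_equivSentence_symm (M := ↥M) χ v).1 hv
    haveI : M ⊨ liftT α T ∪ {χ} :=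
      Theory.model_union_iff.2 ⟨((L.lhomWithConstants α).onTheory_model T).2 M.is_model,
        Theory.model_singleton_iff.2 hχM⟩
    exact Theory.Model.isSatisfiable M

end UnivClosure

section Transfer

variable {T : L.Theory} {α : Type} [Finite α]

theorem models_univFragment_of_models {M : Type*} [L.Structure M] [Nonempty M]
    (hM : M ⊨ T) : M ⊨ univFragment T := by
  haveI := hM
  rw [Theory.model_iff]
  exact fun φ hφ => hφ.2.realize_sentence M

theorem models_univ_iff {ψ : L.Sentence} (hψ : IsUniversalSentence ψ) :
    T ⊨ᵇ ψ ↔ univFragment T ⊨ᵇ ψ := by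
  constructor
  · intro h
    exact Theory.models_sentence_of_mem ⟨hψ, h⟩
  · intro h
    rw [Theory.models_sentence_iff]
    intro M
    haveI : (M : Type (max u v)) ⊨ univFragment T := models_univFragment_of_models M.is_model
    exact h.realize_sentence M

theorem sat_liftT_iff {χ : (L[[α]]).Sentence} (hχ : χ.IsQF) :
    (liftT α T ∪ {χ}).IsSatisfiable ↔ (liftT α (univFragment T) ∪ {χ}).IsSatisfiable := by
  rw [satisfiable_iff_not_models_univClosureNot, satisfiable_iff_not_models_univClosureNot,
    models_univ_iff (isUniversalSentence_univClosureNot hχ)]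

theorem realize_inf_sentence {L' : FirstOrder.Language.{u₂, v₂}} (M : Type*) [L'.Structure M]
    (a b : L'.Sentence) : M ⊨ a ⊓ b ↔ (M ⊨ a ∧ M ⊨ b) :=
  BoundedFormula.realize_inf

theorem sat_union_pair_iff {L' : FirstOrder.Language.{u₂, v₂}} (U : L'.Theory) (a b : L'.Sentence) :
    (U ∪ {a, b}).IsSatisfiable ↔ (U ∪ {a ⊓ b}).IsSatisfiable := by
  constructor
  · rintro ⟨M⟩
    have hM : M ⊨ U ∪ {a, b} := M.is_model
    rw [Theory.model_union_iff, Theory.model_insert_iff, Theory.model_singleton_iff] at hM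
    haveI : (M : Type _) ⊨ U ∪ {a ⊓ b} :=
      Theory.model_union_iff.2 ⟨hM.1, Theory.model_singleton_iff.2
        ((realize_inf_sentence M a b).2 ⟨hM.2.1, hM.2.2⟩)⟩
    exact Theory.Model.isSatisfiable M
  · rintro ⟨M⟩
    have hM : M ⊨ U ∪ {a ⊓ b} := M.is_model
    rw [Theory.model_union_iff, Theory.model_singleton_iff, realize_inf_sentence] at hM
    haveI : (M : Type _) ⊨ U ∪ {a, b} :=
      Theory.model_union_iff.2 ⟨hM.1, Theory.model_insert_iff.2
        ⟨hM.2.1, Theory.model_singleton_iff.2 hM.2.2⟩⟩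
    exact Theory.Model.isSatisfiable M

theorem union_pair_eq {L' : FirstOrder.Language.{u₂, v₂}} (U : L'.Theory) (a b : L'.Sentence) :
    U ∪ {a} ∪ {b} = U ∪ {a, b} := by
  rw [Set.union_assoc]
  rfl

theorem models_liftT_iff {χ φ : (L[[α]]).Sentence} (hχ : χ.IsQF) (hφ : φ.IsQF) :
    (liftT α T ∪ {χ} ⊨ᵇ φ) ↔ (liftT α (univFragment T) ∪ {χ} ⊨ᵇ φ) := by
  rw [Theory.models_iff_not_satisfiable, Theory.models_iff_not_satisfiable,
    union_pair_eq, union_pair_eq, sat_union_pair_iff, sat_union_pair_iff,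
    sat_liftT_iff (hχ.inf hφ.not)]

omit [Finite α] in
theorem model_liftT_univFragment_of {M : Type*} [(L[[α]]).Structure M] [Nonempty M]
    (hM : M ⊨ liftT α T) : M ⊨ liftT α (univFragment T) := by
  letI : L.Structure M := (L.lhomWithConstants α).reduct M
  haveI : (L.lhomWithConstants α).IsExpansionOn M := ⟨fun _ _ => rfl, fun _ _ => rfl⟩
  exact ((L.lhomWithConstants α).onTheory_model _).2
    (models_univFragment_of_models (((L.lhomWithConstants α).onTheory_model T).1 hM))

end Transfer



section TermEmbedding

variable {M₁ : Type w} {M₂ : Type w} [L.Structure M₁] [L.Structure M₂] {k : ℕ}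
  (c₁ : Fin k → M₁) (c₂ : Fin k → M₂)

theorem exists_term (x : (Substructure.closure L (Set.range c₁) : L.Substructure M₁)) :
    ∃ t : L.Term (Fin k), t.realize c₁ = (x : M₁) := by
  obtain ⟨t, ht⟩ := Substructure.mem_closure_iff_exists_term.1 x.2
  refine ⟨t.relabel (Set.rangeSplitting c₁), ?_⟩
  rw [Term.realize_relabel]
  rw [← ht]
  congr 1
  funext a
  exact Set.apply_rangeSplitting c₁ a

/-- A term over the constants representing an element of the generated substructure. -/
noncomputable def termOf (x : (Substructure.closure L (Set.range c₁) : L.Substructure M₁)) :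
    L.Term (Fin k) :=
  (exists_term c₁ x).choose

theorem termOf_spec (x : (Substructure.closure L (Set.range c₁) : L.Substructure M₁)) :
    (termOf c₁ x).realize c₁ = (x : M₁) :=
  (exists_term c₁ x).choose_spec

variable (H : ∀ φ : L.Formula (Fin k), φ.IsQF → φ.Realize c₁ → φ.Realize c₂)

include H

theorem qf_iff {φ : L.Formula (Fin k)} (hφ : φ.IsQF) : φ.Realize c₁ ↔ φ.Realize c₂ := by
  refine ⟨H φ hφ, fun h₂ => ?_⟩
  by_contra h₁
  have := H φ.not hφ.not (by rwa [Formula.realize_not])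
  rw [Formula.realize_not] at this
  exact this h₂

theorem term_eq_iff (t s : L.Term (Fin k)) :
    t.realize c₁ = s.realize c₁ ↔ t.realize c₂ = s.realize c₂ := by
  have := qf_iff c₁ c₂ H (φ := t.equal s) (BoundedFormula.IsAtomic.equal _ _).isQF
  rwa [Formula.realize_equal, Formula.realize_equal] at this

theorem rel_iff {n : ℕ} (R : L.Relations n) (ts : Fin n → L.Term (Fin k)) :
    (RelMap R fun i => (ts i).realize c₁) ↔ RelMap R fun i => (ts i).realize c₂ := by
  have := qf_iff c₁ c₂ H (φ := R.formula ts) (BoundedFormula.IsAtomic.rel _ _).isQF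
  rwa [Formula.realize_rel, Formula.realize_rel] at this

theorem termOf_realize_eq {t : L.Term (Fin k)}
    {x : (Substructure.closure L (Set.range c₁) : L.Substructure M₁)}
    (ht : t.realize c₁ = (x : M₁)) :
    (termOf c₁ x).realize c₂ = t.realize c₂ :=
  (term_eq_iff c₁ c₂ H _ _).1 (by rw [termOf_spec, ht])

/-- The embedding of the substructure generated by the interpretations of the constants into
a second structure interpreting the constants so that the same ground formulas hold. -/
noncomputable def termEmbedding :
    (Substructure.closure L (Set.range c₁) : L.Substructure M₁) ↪[L] M₂ where
  toFun x := (termOf c₁ x).realize c₂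
  inj' := by
    intro x y hxy
    have : (termOf c₁ x).realize c₁ = (termOf c₁ y).realize c₁ :=
      (term_eq_iff c₁ c₂ H _ _).2 hxy
    rw [termOf_spec, termOf_spec] at this
    exact Subtype.ext this
  map_fun' := by
    intro n f xs
    have hco : ((funMap f xs : (Substructure.closure L (Set.range c₁) : L.Substructure M₁)) : M₁)
        = funMap f (fun i => ((xs i : M₁))) := rfl
    have ht : (Term.func f (fun i => termOf c₁ (xs i))).realize c₁
        = ((funMap f xs : (Substructure.closure L (Set.range c₁) : L.Substructure M₁)) : M₁) := by
      rw [hco]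
      simp only [Term.realize_func]
      congr 1
      funext i
      exact termOf_spec c₁ (xs i)
    have h3 := termOf_realize_eq c₁ c₂ H ht
    show (termOf c₁ (funMap f xs)).realize c₂ = _
    rw [h3]
    simp only [Term.realize_func]
    rfl
  map_rel' := by
    intro n r xs
    have h1 := rel_iff c₁ c₂ H r (fun i => termOf c₁ (xs i))
    have h2 : (fun i => (termOf c₁ (xs i)).realize c₁) = fun i => ((xs i : M₁)) := by
      funext i; exact termOf_spec c₁ (xs i)
    rw [h2] at h1
    exact h1.symm

theorem termEmbedding_apply (x) :
    termEmbedding c₁ c₂ H x = (termOf c₁ x).realize c₂ := rfl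

omit H in
theorem mem_closure_con (i : Fin k) :
    c₁ i ∈ (Substructure.closure L (Set.range c₁) : L.Substructure M₁) :=
  Substructure.subset_closure (Set.mem_range_self i)

theorem termEmbedding_con (i : Fin k) :
    termEmbedding c₁ c₂ H ⟨c₁ i, mem_closure_con c₁ i⟩ = c₂ i := by
  rw [termEmbedding_apply]
  have : ((Term.var i : L.Term (Fin k)).realize c₁) = c₁ i := rfl
  have h := termOf_realize_eq c₁ c₂ H (x := ⟨c₁ i, mem_closure_con c₁ i⟩) this
  rw [h]
  rfl

end TermEmbedding

theorem qf_formula_realize_embedding {M N : Type (max u v)} [L.Structure M] [L.Structure N]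
    (g : M ↪[L] N) {α : Type*} {φ : L.Formula α} (h : φ.IsQF) (v : α → M) :
    φ.Realize (⇑g ∘ v) ↔ φ.Realize v := by
  have := h.realize_embedding g (v := v) (xs := (default : Fin 0 → M))
  rwa [Subsingleton.elim ((⇑g) ∘ (default : Fin 0 → M)) (default : Fin 0 → N)] at this

section Central

variable {S : L.Theory} {nc na nb : ℕ}

local notation "αa" => (Fin nc ⊕ Fin na)
local notation "αb" => (Fin nc ⊕ Fin nb)
local notation "αab" => (Fin nc ⊕ (Fin na ⊕ Fin nb))

/-- The central amalgamation argument. -/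
theorem central (hAP : Amalgamation.{u, v, max u v} S) (hU : S.IsUniversal)
    {A : (L[[αa]]).Sentence} {B : (L[[αb]]).Sentence} (hA : A.IsQF) (hB : B.IsQF)
    (M₁ : Theory.ModelType.{u, v, max u v} (liftT αa S ∪ {A}))
    (M₂ : Theory.ModelType.{u, v, max u v} (liftT αb S ∪ {B}))
    (Hqf : ∀ δ : (L[[Fin nc]]).Sentence, δ.IsQF →
      (M₂ : Type (max u v)) ⊨ (L.lhomWithConstantsMap (Sum.inl : Fin nc → αb)).onSentence δ →
      (M₁ : Type (max u v)) ⊨ (L.lhomWithConstantsMap (Sum.inl : Fin nc → αa)).onSentence δ) :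
    Theory.IsSatisfiable (liftT αab S ∪
      {(L.lhomWithConstantsMap (Sum.map id Sum.inl : αa → αab)).onSentence A,
       (L.lhomWithConstantsMap (Sum.map id Sum.inr : αb → αab)).onSentence B}) := by
  -- L-structures on the two models
  letI sL1 : L.Structure M₁ := (L.lhomWithConstants αa).reduct M₁
  letI sL2 : L.Structure M₂ := (L.lhomWithConstants αb).reduct M₂
  haveI e1 : (L.lhomWithConstants αa).IsExpansionOn (M₁ : Type (max u v)) :=
    ⟨fun _ _ => rfl, fun _ _ => rfl⟩
  haveI e2 : (L.lhomWithConstants αb).IsExpansionOn (M₂ : Type (max u v)) :=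
    ⟨fun _ _ => rfl, fun _ _ => rfl⟩
  -- L[[Fin nc]]-structures
  letI snc1 : (L[[Fin nc]]).Structure M₁ :=
    (L.lhomWithConstantsMap (Sum.inl : Fin nc → αa)).reduct M₁
  letI snc2 : (L[[Fin nc]]).Structure M₂ :=
    (L.lhomWithConstantsMap (Sum.inl : Fin nc → αb)).reduct M₂
  haveI enc1 : (L.lhomWithConstantsMap (Sum.inl : Fin nc → αa)).IsExpansionOn
      (M₁ : Type (max u v)) := ⟨fun _ _ => rfl, fun _ _ => rfl⟩
  haveI enc2 : (L.lhomWithConstantsMap (Sum.inl : Fin nc → αb)).IsExpansionOn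
      (M₂ : Type (max u v)) := ⟨fun _ _ => rfl, fun _ _ => rfl⟩
  haveI encL1 : (L.lhomWithConstants (Fin nc)).IsExpansionOn (M₁ : Type (max u v)) :=
    ⟨fun _ _ => rfl, fun _ _ => rfl⟩
  haveI encL2 : (L.lhomWithConstants (Fin nc)).IsExpansionOn (M₂ : Type (max u v)) :=
    ⟨fun _ _ => rfl, fun _ _ => rfl⟩
  -- constants
  set cA : αa → M₁ := fun a => ((L.con a : (L[[αa]]).Constants) : M₁) with hcA
  set cB : αb → M₂ := fun a => ((L.con a : (L[[αb]]).Constants) : M₂) with hcB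
  set c₁ : Fin nc → M₁ := fun i => ((L.con i : (L[[Fin nc]]).Constants) : M₁) with hc₁
  set c₂ : Fin nc → M₂ := fun i => ((L.con i : (L[[Fin nc]]).Constants) : M₂) with hc₂
  -- the QF-transfer hypothesis at the formula level
  have H : ∀ φ : L.Formula (Fin nc), φ.IsQF → φ.Realize c₁ → φ.Realize c₂ := by
    intro φ hφ h1
    by_contra h2
    have hnot : (Formula.not φ).Realize c₂ := by rwa [Formula.realize_not]
    have hδ2 : (M₂ : Type (max u v)) ⊨
        (L.lhomWithConstantsMap (Sum.inl : Fin nc → αb)).onSentence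
          (Formula.equivSentence φ.not) := by
      rw [LHom.realize_onSentence, Formula.realize_equivSentence]
      exact hnot
    have hδ1 := Hqf _ (isQF_equivSentence hφ.not) hδ2
    rw [LHom.realize_onSentence, Formula.realize_equivSentence, Formula.realize_not] at hδ1
    exact hδ1 h1
  -- models of S
  have hM1S : (M₁ : Type (max u v)) ⊨ S :=
    ((L.lhomWithConstants αa).onTheory_model S).1 (M₁.is_model.mono Set.subset_union_left)
  have hM2S : (M₂ : Type (max u v)) ⊨ S :=
    ((L.lhomWithConstants αb).onTheory_model S).1 (M₂.is_model.mono Set.subset_union_left)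
  have hM1A : (M₁ : Type (max u v)) ⊨ A :=
    Theory.model_singleton_iff.1 (M₁.is_model.mono Set.subset_union_right)
  have hM2B : (M₂ : Type (max u v)) ⊨ B :=
    Theory.model_singleton_iff.1 (M₂.is_model.mono Set.subset_union_right)
  -- the common substructure
  haveI := hM1S
  haveI := hU
  have hCS : (Substructure.closure L (Set.range c₁) : L.Substructure M₁) ⊨ S :=
    Substructure.models_of_isUniversal _ S
  obtain ⟨N, g₁, g₂, hg⟩ := hAP _ _ _ hCS hM1S hM2S
    (Substructure.closure L (Set.range c₁)).subtype (termEmbedding c₁ c₂ H)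
  -- constant interpretations on N
  set κ : (αab) → N := Sum.elim (fun i => g₁ (c₁ i))
    (Sum.elim (fun j => g₁ (cA (Sum.inr j))) (fun j => g₂ (cB (Sum.inr j)))) with hκ
  letI scab : (constantsOn (αab)).Structure N := constantsOn.structure κ
  letI sca : (constantsOn αa).Structure N := constantsOn.structure (κ ∘ Sum.map id Sum.inl)
  letI scb : (constantsOn αb).Structure N := constantsOn.structure (κ ∘ Sum.map id Sum.inr)
  haveI ea : (LHom.constantsOnMap (Sum.map id Sum.inl : αa → αab)).IsExpansionOn
      (N : Type (max u v)) := constantsOnMap_isExpansionOn rfl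
  haveI eb : (LHom.constantsOnMap (Sum.map id Sum.inr : αb → αab)).IsExpansionOn
      (N : Type (max u v)) := constantsOnMap_isExpansionOn rfl
  -- key agreement on the shared constants
  have hshared : ∀ i : Fin nc, g₁ (c₁ i) = g₂ (c₂ i) := by
    intro i
    have := hg ⟨c₁ i, mem_closure_con c₁ i⟩
    rwa [termEmbedding_con c₁ c₂ H i] at this
  have hga : (fun a => ((L.con a : (L[[αa]]).Constants) : N)) = ⇑g₁ ∘ cA := by
    funext a
    cases a with
    | inl i => rfl
    | inr j => rfl
  have hgb : (fun a => ((L.con a : (L[[αb]]).Constants) : N)) = ⇑g₂ ∘ cB := by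
    funext a
    cases a with
    | inl i => exact hshared i
    | inr j => rfl
  haveI eab1 : (L.lhomWithConstantsMap (Sum.map id Sum.inl : αa → αab)).IsExpansionOn
      (N : Type (max u v)) :=
    (inferInstance : ((LHom.id L).sumMap
      (LHom.constantsOnMap (Sum.map id Sum.inl : αa → αab))).IsExpansionOn (N : Type (max u v)))
  haveI eab2 : (L.lhomWithConstantsMap (Sum.map id Sum.inr : αb → αab)).IsExpansionOn
      (N : Type (max u v)) :=
    (inferInstance : ((LHom.id L).sumMap
      (LHom.constantsOnMap (Sum.map id Sum.inr : αb → αab))).IsExpansionOn (N : Type (max u v)))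
  -- N satisfies the lifted A
  have hNA : (N : Type (max u v)) ⊨
      (L.lhomWithConstantsMap (Sum.map id Sum.inl : αa → αab)).onSentence A := by
    rw [LHom.realize_onSentence, ← Formula.realize_equivSentence_symm_con, hga,
      qf_formula_realize_embedding g₁ (isQF_equivSentence_symm hA) cA,
      Formula.realize_equivSentence_symm_con]
    exact hM1A
  have hNB : (N : Type (max u v)) ⊨
      (L.lhomWithConstantsMap (Sum.map id Sum.inr : αb → αab)).onSentence B := by
    rw [LHom.realize_onSentence, ← Formula.realize_equivSentence_symm_con, hgb,
      qf_formula_realize_embedding g₂ (isQF_equivSentence_symm hB) cB,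
      Formula.realize_equivSentence_symm_con]
    exact hM2B
  haveI : (N : Type (max u v)) ⊨ liftT (αab) S ∪
      {(L.lhomWithConstantsMap (Sum.map id Sum.inl : αa → αab)).onSentence A,
       (L.lhomWithConstantsMap (Sum.map id Sum.inr : αb → αab)).onSentence B} :=
    Theory.model_union_iff.2 ⟨((L.lhomWithConstants (αab)).onTheory_model S).2 N.is_model,
      Theory.model_insert_iff.2 ⟨hNA, Theory.model_singleton_iff.2 hNB⟩⟩
  exact Theory.Model.isSatisfiable N

end Central

section Conj

variable {L' : FirstOrder.Language.{u₂, v₂}}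

/-- Finite conjunction of a list of sentences. -/
def finConj (l : List (L'.Sentence)) : L'.Sentence :=
  l.foldr (· ⊓ ·) ⊤

theorem isQF_finConj {l : List (L'.Sentence)} (h : ∀ φ ∈ l, φ.IsQF) : (finConj l).IsQF := by
  induction l with
  | nil => exact isQF_bot.not
  | cons a l ih =>
    exact ((h a List.mem_cons_self).imp
      (ih (fun φ hφ => h φ (List.mem_cons_of_mem a hφ))).not).not

theorem realize_finConj {M : Type w} [L'.Structure M] {l : List (L'.Sentence)} :
    M ⊨ finConj l ↔ ∀ φ ∈ l, M ⊨ φ := by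
  induction l with
  | nil => simp [finConj, Sentence.Realize]
  | cons a l ih =>
    rw [show finConj (a :: l) = a ⊓ finConj l from rfl, realize_inf_sentence]
    simp only [List.mem_cons]
    constructor
    · rintro ⟨h1, h2⟩ φ (rfl | hφ)
      · exact h1
      · exact ih.1 h2 φ hφ
    · intro h
      exact ⟨h a (Or.inl rfl), ih.2 fun φ hφ => h φ (Or.inr hφ)⟩

theorem iUnion_finset_image {α β : Type*} (U : Set β) (f : α → β) (Δ : Set α) :
    ⋃ s : Finset ↥Δ, (U ∪ f '' (Subtype.val '' (s : Set ↥Δ))) = U ∪ f '' Δ := by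
  apply subset_antisymm
  · refine Set.iUnion_subset fun s => Set.union_subset_union subset_rfl (Set.image_mono ?_)
    rintro x ⟨y, _, rfl⟩
    exact y.2
  · rintro x (hx | ⟨d, hd, rfl⟩)
    · exact Set.mem_iUnion.2 ⟨∅, Or.inl hx⟩
    · exact Set.mem_iUnion.2 ⟨{⟨d, hd⟩}, Or.inr ⟨d, ⟨⟨d, hd⟩, by simp, rfl⟩, rfl⟩⟩

theorem directed_finset_image {α β : Type*} (U : Set β) (f : α → β) (Δ : Set α) :
    Directed (· ⊆ ·) (fun s : Finset ↥Δ => U ∪ f '' (Subtype.val '' (s : Set ↥Δ))) := by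
  classical
  intro s t
  refine ⟨s ∪ t, ?_, ?_⟩
  · refine Set.union_subset_union subset_rfl (Set.image_mono (Set.image_mono ?_))
    rw [Finset.coe_union]
    exact Set.subset_union_left
  · refine Set.union_subset_union subset_rfl (Set.image_mono (Set.image_mono ?_))
    rw [Finset.coe_union]
    exact Set.subset_union_right

end Conj

section Main

variable {S : L.Theory} {nc na nb : ℕ}

theorem groundInterpolation_of_amalgamation
    (hAP : Amalgamation.{u, v, max u v} S) (hU : S.IsUniversal) :
    GroundInterpolation S := by
  classical
  intro nc na nb A B hA hB hJU
  set ρa := L.lhomWithConstantsMap (Sum.inl : Fin nc → Fin nc ⊕ Fin na) with hρa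
  set ρb := L.lhomWithConstantsMap (Sum.inl : Fin nc → Fin nc ⊕ Fin nb) with hρb
  set Θ : Set ((L[[Fin nc]]).Sentence) :=
    {θ | θ.IsQF ∧ (liftT (Fin nc ⊕ Fin na) S ∪ {A}) ⊨ᵇ ρa.onSentence θ} with hΘ
  -- Step 1: S ∪ {B} ∪ Θ is unsatisfiable.
  have step1 : ¬ Theory.IsSatisfiable
      (liftT (Fin nc ⊕ Fin nb) S ∪ {B} ∪ ρb.onSentence '' Θ) := by
    rintro ⟨M₂⟩
    have hM₂ := M₂.is_model
    rw [Theory.model_union_iff, Theory.model_union_iff] at hM₂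
    obtain ⟨⟨hM₂S, hM₂B⟩, hM₂Θ⟩ := hM₂
    letI red2 : (L[[Fin nc]]).Structure M₂ := ρb.reduct M₂
    haveI ered2 : ρb.IsExpansionOn (M₂ : Type (max u v)) := ⟨fun _ _ => rfl, fun _ _ => rfl⟩
    set Δ : Set ((L[[Fin nc]]).Sentence) :=
      {δ | δ.IsQF ∧ (M₂ : Type (max u v)) ⊨ ρb.onSentence δ} with hΔ
    -- the A-side together with all ground facts of M₂ is satisfiable
    have satΔ : Theory.IsSatisfiable
        (liftT (Fin nc ⊕ Fin na) S ∪ {A} ∪ ρa.onSentence '' Δ) := by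
      rw [← iUnion_finset_image (liftT (Fin nc ⊕ Fin na) S ∪ {A}) ρa.onSentence Δ,
        Theory.isSatisfiable_directed_union_iff
          (directed_finset_image (liftT (Fin nc ⊕ Fin na) S ∪ {A}) _ Δ)]
      intro s
      by_contra hno
      set l : List ((L[[Fin nc]]).Sentence) := s.toList.map Subtype.val with hl
      have hlΔ : ∀ δ ∈ l, δ ∈ Δ := by
        intro δ hδ
        rw [hl, List.mem_map] at hδ
        obtain ⟨⟨δ', hδ'⟩, _, rfl⟩ := hδ
        exact hδ'
      set δb := finConj l with hδb
      have hQFδb : δb.IsQF := isQF_finConj fun φ hφ => (hlΔ φ hφ).1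
      -- S ∪ {A} entails the negation of the conjunction
      have hent : (liftT (Fin nc ⊕ Fin na) S ∪ {A}) ⊨ᵇ ρa.onSentence δb.not := by
        rw [Theory.models_iff_not_satisfiable]
        rintro ⟨M₁⟩
        apply hno
        have hM₁ := M₁.is_model
        rw [Theory.model_union_iff, Theory.model_singleton_iff] at hM₁
        obtain ⟨hM₁SA, hM₁n⟩ := hM₁
        letI red1 : (L[[Fin nc]]).Structure M₁ := ρa.reduct M₁
        haveI ered1 : ρa.IsExpansionOn (M₁ : Type (max u v)) := ⟨fun _ _ => rfl, fun _ _ => rfl⟩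
        have hδbM₁ : (M₁ : Type (max u v)) ⊨ δb := by
          have : ¬ (M₁ : Type (max u v)) ⊨ ρa.onSentence δb.not := by
            intro hcon
            rw [Sentence.Realize] at hM₁n
            rw [Formula.realize_not] at hM₁n
            exact hM₁n hcon
          rw [LHom.realize_onSentence] at this
          rw [Sentence.Realize, Formula.realize_not, not_not] at this
          exact this
        haveI : (M₁ : Type (max u v)) ⊨ liftT (Fin nc ⊕ Fin na) S ∪ {A} ∪
            ρa.onSentence '' (Subtype.val '' (s : Set ↥Δ)) := by
          rw [Theory.model_union_iff]
          refine ⟨hM₁SA, ?_⟩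
          rw [Theory.model_iff]
          rintro φ ⟨δ, ⟨⟨δ', hδ'⟩, hmem, rfl⟩, rfl⟩
          have hδl : δ' ∈ l := by
            rw [hl, List.mem_map]
            exact ⟨⟨δ', hδ'⟩, Finset.mem_toList.2 hmem, rfl⟩
          have := realize_finConj.1 hδbM₁ δ' hδl
          show (M₁ : Type (max u v)) ⊨ ρa.onSentence δ'
          rw [LHom.realize_onSentence]
          exact this
        exact Theory.Model.isSatisfiable M₁
      have hmemΘ : δb.not ∈ Θ := ⟨hQFδb.not, hent⟩
      -- but M₂ satisfies both the conjunction and its negation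
      have h1 : (M₂ : Type (max u v)) ⊨ ρb.onSentence δb.not := by
        rw [Theory.model_iff] at hM₂Θ
        exact hM₂Θ _ ⟨δb.not, hmemΘ, rfl⟩
      have h2 : (M₂ : Type (max u v)) ⊨ δb := by
        rw [realize_finConj]
        intro φ hφ
        have := (hlΔ φ hφ).2
        rwa [LHom.realize_onSentence] at this
      rw [LHom.realize_onSentence, Sentence.Realize, Formula.realize_not] at h1
      exact h1 h2
    -- now amalgamate
    obtain ⟨M₁⟩ := satΔ
    have hM₁ := M₁.is_model
    haveI hM₁SA : (M₁ : Type (max u v)) ⊨ liftT (Fin nc ⊕ Fin na) S ∪ {A} :=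
      hM₁.mono Set.subset_union_left
    haveI hM₂SB : (M₂ : Type (max u v)) ⊨ liftT (Fin nc ⊕ Fin nb) S ∪ {B} :=
      Theory.model_union_iff.2 ⟨hM₂S, hM₂B⟩
    have Hqf : ∀ δ : (L[[Fin nc]]).Sentence, δ.IsQF →
        (M₂ : Type (max u v)) ⊨ ρb.onSentence δ →
        (M₁ : Type (max u v)) ⊨ ρa.onSentence δ := by
      intro δ hδ h2
      have : ρa.onSentence δ ∈ ρa.onSentence '' Δ := ⟨δ, ⟨hδ, h2⟩, rfl⟩
      exact (Theory.model_iff _).1 (hM₁.mono Set.subset_union_right) _ this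
    exact hJU (central hAP hU hA hB
      (Theory.ModelType.of _ (M₁ : Type (max u v)))
      (Theory.ModelType.of _ (M₂ : Type (max u v))) Hqf)
  -- Step 2: compactness via directed unions gives a finite conjunction
  have step2 : ¬ ∀ s : Finset ↥Θ, Theory.IsSatisfiable
      (liftT (Fin nc ⊕ Fin nb) S ∪ {B} ∪
        ρb.onSentence '' (Subtype.val '' (s : Set ↥Θ))) := by
    intro hall
    apply step1
    rw [← iUnion_finset_image (liftT (Fin nc ⊕ Fin nb) S ∪ {B}) ρb.onSentence Θ,
      Theory.isSatisfiable_directed_union_iff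
        (directed_finset_image (liftT (Fin nc ⊕ Fin nb) S ∪ {B}) _ Θ)]
    exact hall
  push_neg at step2
  obtain ⟨s, hs⟩ := step2
  set l : List ((L[[Fin nc]]).Sentence) := s.toList.map Subtype.val with hl
  have hlΘ : ∀ θ ∈ l, θ ∈ Θ := by
    intro θ hθ
    rw [hl, List.mem_map] at hθ
    obtain ⟨⟨θ', hθ'⟩, _, rfl⟩ := hθ
    exact hθ'
  refine ⟨finConj l, isQF_finConj fun φ hφ => (hlΘ φ hφ).1, ?_, ?_⟩
  · -- S ∪ {A} entails the interpolant
    rw [Theory.models_sentence_iff]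
    intro M
    haveI := M.is_model
    letI red1 : (L[[Fin nc]]).Structure M := ρa.reduct M
    haveI ered1 : ρa.IsExpansionOn (M : Type (max u v)) := ⟨fun _ _ => rfl, fun _ _ => rfl⟩
    rw [LHom.realize_onSentence, realize_finConj]
    intro θ hθ
    have := ((hlΘ θ hθ).2).realize_sentence (M : Type (max u v))
    rwa [LHom.realize_onSentence] at this
  · -- S ∪ {B} plus the interpolant is unsatisfiable
    rintro ⟨M⟩
    apply hs
    have hM := M.is_model
    rw [Theory.model_union_iff] at hM
    obtain ⟨hMS, hMBI⟩ := hM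
    letI red2 : (L[[Fin nc]]).Structure M := ρb.reduct M
    haveI ered2 : ρb.IsExpansionOn (M : Type (max u v)) := ⟨fun _ _ => rfl, fun _ _ => rfl⟩
    have hMB : (M : Type (max u v)) ⊨ B :=
      (Theory.model_iff _).1 hMBI _ (by simp)
    have hMI : (M : Type (max u v)) ⊨ ρb.onSentence (finConj l) :=
      (Theory.model_iff _).1 hMBI _ (by simp [hρb])
    rw [LHom.realize_onSentence, realize_finConj] at hMI
    haveI : (M : Type (max u v)) ⊨ liftT (Fin nc ⊕ Fin nb) S ∪ {B} ∪
        ρb.onSentence '' (Subtype.val '' (s : Set ↥Θ)) := by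
      rw [Theory.model_union_iff]
      refine ⟨Theory.model_union_iff.2 ⟨hMS, Theory.model_singleton_iff.2 hMB⟩, ?_⟩
      rw [Theory.model_iff]
      rintro φ ⟨θ, ⟨⟨θ', hθ'⟩, hmem, rfl⟩, rfl⟩
      have hθl : θ' ∈ l := by
        rw [hl, List.mem_map]
        exact ⟨⟨θ', hθ'⟩, Finset.mem_toList.2 hmem, rfl⟩
      show (M : Type (max u v)) ⊨ ρb.onSentence θ'
      rw [LHom.realize_onSentence]
      exact hMI θ' hθl
    exact Theory.Model.isSatisfiable M

end Main

end InterpHelpers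

/-- if `T_∀` has the amalgamation property then both `T_∀` and `T` have
the ground interpolation property. -/
theorem statement_3 {L : FirstOrder.Language.{u, v}} (T : L.Theory)
    (hAP : PaperFOL.Amalgamation.{u, v, max u v} (PaperFOL.univFragment T)) :
    PaperFOL.GroundInterpolation (PaperFOL.univFragment T) ∧
      PaperFOL.GroundInterpolation T := by
  classical
  open PaperFOL InterpHelpers in
  · have hU : (PaperFOL.univFragment T).IsUniversal := by
      refine ⟨fun φ hφ => ?_⟩
      obtain ⟨n, ψ, hq, rfl⟩ := hφ.1
      exact isUniversal_alls hq.isUniversal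
    have h1 : GroundInterpolation (univFragment T) :=
      groundInterpolation_of_amalgamation hAP hU
    refine ⟨h1, ?_⟩
    intro nc na nb A B hA hB hJU
    have hABqf : ((L.lhomWithConstantsMap (Sum.map id Sum.inl)).onSentence A ⊓
        (L.lhomWithConstantsMap (Sum.map id Sum.inr)).onSentence B).IsQF :=
      (isQF_onBoundedFormula hA).inf (isQF_onBoundedFormula hB)
    have hJU' : JointlyUnsat (univFragment T) A B := by
      intro hsat
      apply hJU
      rw [JointlyUnsat] at *
      rw [sat_union_pair_iff] at hsat
      rw [sat_union_pair_iff, sat_liftT_iff hABqf]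
      exact hsat
    obtain ⟨I, hIQF, hIent, hIuns⟩ := h1 nc na nb A B hA hB hJU'
    refine ⟨I, hIQF, ?_, ?_⟩
    · rw [show PaperFOL.liftT (Fin nc ⊕ Fin na) T = liftT (Fin nc ⊕ Fin na) T from rfl,
        models_liftT_iff hA (isQF_onSentence hIQF)]
      exact hIent
    · intro hsat
      apply hIuns
      rw [sat_union_pair_iff] at hsat
      rw [sat_union_pair_iff, ← sat_liftT_iff (hB.inf (isQF_onSentence hIQF))]
      exact hsat
end
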